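/- Let α > 0, let ω_ℝ : ℝ → [0,∞) be measurable with ∫_ℝ |x|^m ω_ℝ(x) dx < ∞ for all m ∈ ℕ, and let (P_k)_{k≥0} be monic real polynomials with deg P_k = k satisfying ∫_ℝ P_j(x)·P_k(x)·ω_ℝ(x) dx = ĥ_k·δ_{jk} with ĥ_k > 0. Let ω : ℂ → [0,∞) be measurable with ∫_ℂ |z|^m ω(z) dA(z) < ∞ for all m, and suppose the rescaled polynomials p_k(z) := α^k·P_k(z/α) satisfy ∫_ℂ p_j(z)·conj(p_k(z))·ω(z) dA(z) = h_k·δ_{jk} with h_k > 0. Then for all N ≥ 1 and all integers p ≥ 0: ∫_ℂ z^{p} · (Σ_{k=0}^{N−1} p_k(z)·conj(p_k(z))/h_k) · ω(z) dA(z) = α^p · ∫_ℝ x^{p} · (Σ_{k=0}^{N−1} P_k(x)²/ĥ_k) · ω_ℝ(x) dx. -/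

import Mathlib

/-!
For a family `b` orthogonal for a pairing, with `⟪b j, b k⟫ = δⱼₖ cₖ`, the functional
`q ↦ ⟪q, b k⟫ / cₖ` is the `k`-th coordinate of `q` in `b`, because a monic family of exact
degrees spans the polynomials. So both sides are sums over `k` of the `k`-th coordinate of
`X ^ p * p k` (in the basis `p`) and of `X ^ p * P k` (in the basis `P`), and the substitution
`X ↦ X / α`, which sends `P j` to `α⁻¹ ^ j • p j`, shows that these coordinates differ by `α ^ p`.
-/

open Polynomial Finset MeasureTheory ComplexConjugate

namespace Polynomial

theorem span_range_eq_top_of_monic {R : Type*} [Ring R] [Nontrivial R] {P : ℕ → R[X]}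
    (hmonic : ∀ k, (P k).Monic) (hdeg : ∀ k, (P k).natDegree = k) :
    Submodule.span R (Set.range P) = ⊤ :=
  Sequence.span ⟨P, fun k => by rw [degree_eq_natDegree (hmonic k).ne_zero, hdeg]⟩
    fun k => by simp [(hmonic k).leadingCoeff]

variable {K L : Type*} [Field K] [Field L] [Algebra K L]

theorem mul_apply_X_pow_mul_of_rescale {P p : ℕ → K[X]} (hmonic : ∀ k, (P k).Monic)
    (hdeg : ∀ k, (P k).natDegree = k) {α : K} (hα : α ≠ 0)
    (hp : ∀ k, p k = α ^ k • (P k).comp (C α⁻¹ * X)) {k : ℕ} {B B' : K[X] →ₗ[K] L} {c c' : L}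
    (hB : ∀ j, B (p j) = if j = k then c else 0) (hB' : ∀ j, B' (P j) = if j = k then c' else 0)
    (n : ℕ) : c' * B (X ^ n * p k) = α ^ n • (c * B' (X ^ n * P k)) := by
  set σ : K[X] →ₗ[K] K[X] := (aeval (C α⁻¹ * X)).toLinearMap
  have hσ : ∀ q, σ q = q.comp (C α⁻¹ * X) := fun q => comp_eq_aeval.symm
  have hσP : ∀ j, σ (P j) = α⁻¹ ^ j • p j := fun j => by
    rw [hp, smul_smul, ← mul_pow, inv_mul_cancel₀ hα, one_pow, one_smul, hσ]
  -- Both functionals vanish on `P j` for `j ≠ k` and agree on `P k`; the family `P` spans.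
  have hfun : c' • (B ∘ₗ σ) = (α⁻¹ ^ k • c) • B' := by
    refine LinearMap.ext_on_range (span_range_eq_top_of_monic hmonic hdeg) fun j => ?_
    simp only [LinearMap.smul_apply, LinearMap.comp_apply, hσP, map_smul, hB, hB']
    split_ifs with hjk
    · subst hjk; rw [smul_eq_mul, smul_eq_mul, smul_mul_assoc, mul_smul_comm, mul_comm]
    · simp
  have hσXP : σ (X ^ n * P k) = (α⁻¹ ^ n * α⁻¹ ^ k) • (X ^ n * p k) := by
    rw [hσ, mul_comp, ← hσ (P k), hσP, X_pow_comp, mul_pow, ← C_pow, C_mul', smul_mul_smul_comm]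
  have hXP := LinearMap.congr_fun hfun (X ^ n * P k)
  simp only [LinearMap.smul_apply, LinearMap.comp_apply, hσXP, map_smul] at hXP
  simp only [Algebra.smul_def, Algebra.algebraMap_self, RingHom.id_apply, map_mul, map_pow,
    map_inv₀] at hXP ⊢
  set a := algebraMap K L α
  have ha : a ≠ 0 := (_root_.map_ne_zero _).2 hα
  calc c' * B (X ^ n * p k)
      = (a * a⁻¹) ^ n * (a * a⁻¹) ^ k * (c' * B (X ^ n * p k)) := by
        rw [mul_inv_cancel₀ ha, one_pow, one_pow, one_mul, one_mul]
    _ = a ^ n * a ^ k * (c' * (a⁻¹ ^ n * a⁻¹ ^ k * B (X ^ n * p k))) := by ring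
    _ = (a * a⁻¹) ^ k * (a ^ n * (c * B' (X ^ n * P k))) := by rw [hXP]; ring
    _ = a ^ n * (c * B' (X ^ n * P k)) := by rw [mul_inv_cancel₀ ha, one_pow, one_mul]

end Polynomial

section WeightedPairing

variable {𝕜 : Type*} [RCLike 𝕜] [MeasurableSpace 𝕜] [BorelSpace 𝕜] {μ : Measure 𝕜} {w : 𝕜 → ℝ}

theorem integrable_aeval_mul_ofReal (hw : ∀ m : ℕ, Integrable (fun x => ‖x‖ ^ m * w x) μ)
    (q : ℝ[X]) : Integrable (fun x => aeval x q * (w x : 𝕜)) μ := by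
  have hw_meas : AEStronglyMeasurable (fun x => (w x : 𝕜)) μ := by
    simpa using (hw 0).ofReal (𝕜 := 𝕜) |>.aestronglyMeasurable
  have hpow : ∀ m : ℕ, Integrable (fun x => x ^ m * (w x : 𝕜)) μ := fun m =>
    ((hw m).ofReal (𝕜 := 𝕜)).mono ((continuous_pow m).aestronglyMeasurable.mul hw_meas)
      (ae_of_all _ fun x => by simp)
  simp only [aeval_eq_sum_range, Finset.sum_mul, smul_mul_assoc]
  exact integrable_finsetSum _ fun i _ => (hpow i).smul (q.coeff i)

theorem integrable_aeval_mul_conj_aeval_mul_ofReal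
    (hw : ∀ m : ℕ, Integrable (fun x => ‖x‖ ^ m * w x) μ) (q r : ℝ[X]) :
    Integrable (fun x => aeval x q * conj (aeval x r) * (w x : 𝕜)) μ := by
  have hw_meas : AEStronglyMeasurable (fun x => (w x : 𝕜)) μ := by
    simpa using (integrable_aeval_mul_ofReal hw 1).aestronglyMeasurable
  refine (integrable_aeval_mul_ofReal hw (q * r)).mono ?_ (ae_of_all _ fun x => by simp)
  have hcont : Continuous fun x : 𝕜 => aeval x q * conj (aeval x r) :=
    q.continuous_aeval.mul (RCLike.continuous_conj.comp r.continuous_aeval)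
  exact hcont.aestronglyMeasurable.mul hw_meas

variable (μ w) in
noncomputable def weightedPairing (hw : ∀ m : ℕ, Integrable (fun x => ‖x‖ ^ m * w x) μ)
    (r : ℝ[X]) : ℝ[X] →ₗ[ℝ] 𝕜 where
  toFun q := ∫ x, aeval x q * conj (aeval x r) * (w x : 𝕜) ∂μ
  map_add' q₁ q₂ := by
    simp only [map_add, add_mul]
    exact integral_add (integrable_aeval_mul_conj_aeval_mul_ofReal hw q₁ r)
      (integrable_aeval_mul_conj_aeval_mul_ofReal hw q₂ r)
  map_smul' c q := by
    simp only [map_smul, smul_mul_assoc, RingHom.id_apply]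
    exact integral_smul c _

theorem weightedPairing_apply (hw : ∀ m : ℕ, Integrable (fun x => ‖x‖ ^ m * w x) μ)
    (r q : ℝ[X]) :
    weightedPairing μ w hw r q = ∫ x, aeval x q * conj (aeval x r) * (w x : 𝕜) ∂μ :=
  rfl

theorem integral_pow_mul_sum_mul_eq_sum_weightedPairing
    (hw : ∀ m : ℕ, Integrable (fun x => ‖x‖ ^ m * w x) μ) (b : ℕ → ℝ[X]) (c : ℕ → 𝕜)
    (s : Finset ℕ) (n : ℕ) :
    ∫ x, x ^ n * (∑ k ∈ s, aeval x (b k) * conj (aeval x (b k)) / c k) * (w x : 𝕜) ∂μ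
      = ∑ k ∈ s, weightedPairing μ w hw (b k) (X ^ n * b k) / c k := by
  simp only [weightedPairing_apply, ← integral_div]
  rw [← integral_finsetSum _ fun k _ =>
    (integrable_aeval_mul_conj_aeval_mul_ofReal hw _ _).div_const _]
  congr 1 with x
  simp only [Finset.mul_sum, Finset.sum_mul, map_mul, map_pow, aeval_X]
  refine Finset.sum_congr rfl fun k _ => ?_
  ring

end WeightedPairing

theorem holomorphic_moment_eq_hermitian_moment
    (α : ℝ) (hα : 0 < α)
    (ωR : ℝ → ℝ)
    (hmomR : ∀ m : ℕ, Integrable (fun x : ℝ => |x| ^ m * ωR x))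
    (P : ℕ → Polynomial ℝ)
    (hmonic : ∀ k, (P k).Monic) (hdeg : ∀ k, (P k).natDegree = k)
    (hh : ℕ → ℝ) (hhpos : ∀ k, 0 < hh k)
    (horthR : ∀ j k : ℕ,
      (∫ x : ℝ, Polynomial.eval x (P j) * Polynomial.eval x (P k) * ωR x)
      = if j = k then hh k else 0)
    (ω : ℂ → ℝ)
    (hmom : ∀ m : ℕ, Integrable (fun z : ℂ => ‖z‖ ^ m * ω z))
    (p : ℕ → Polynomial ℝ)
    (hp : ∀ k, p k = α ^ k • (P k).comp (Polynomial.C α⁻¹ * Polynomial.X))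
    (h : ℕ → ℝ) (hpos : ∀ k, 0 < h k)
    (horth : ∀ j k : ℕ,
      (1 / (Real.pi : ℂ)) * ∫ z : ℂ,
        (Polynomial.aeval z (p j)) * (starRingEnd ℂ) (Polynomial.aeval z (p k)) * (ω z : ℂ)
      = if j = k then (h k : ℂ) else 0)
    (N : ℕ) (pp : ℕ) :
    (1 / (Real.pi : ℂ)) * ∫ z : ℂ,
        z ^ pp *
          (∑ k ∈ Finset.range N,
            Polynomial.aeval z (p k) * (starRingEnd ℂ) (Polynomial.aeval z (p k)) / (h k : ℂ)) *
          (ω z : ℂ)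
      = ((α ^ pp * ∫ x : ℝ, x ^ pp *
            (∑ k ∈ Finset.range N, (Polynomial.eval x (P k)) ^ 2 / hh k) * ωR x : ℝ) : ℂ) := by
  have hmomR' : ∀ m : ℕ, Integrable (fun x : ℝ => ‖x‖ ^ m * ωR x) := by
    simpa only [Real.norm_eq_abs] using hmomR
  let B k := (1 / (Real.pi : ℂ)) • weightedPairing volume ω hmom (p k)
  let B' k := Algebra.linearMap ℝ ℂ ∘ₗ weightedPairing volume ωR hmomR' (P k)
  have hB : ∀ j k, B k (p j) = if j = k then (h k : ℂ) else 0 := fun j k => horth j k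
  have hB' : ∀ j k, B' k (P j) = if j = k then (hh k : ℂ) else 0 := fun j k => by
    simp only [B', LinearMap.comp_apply, weightedPairing_apply, coe_aeval_eq_eval, conj_trivial,
      RCLike.ofReal_real_eq_id, id, horthR, Algebra.linearMap_apply]
    split_ifs <;> simp
  have hLHS :=
    integral_pow_mul_sum_mul_eq_sum_weightedPairing hmom p (fun k => (h k : ℂ)) (range N) pp
  simp only [RCLike.ofReal_eq_complex_ofReal] at hLHS
  have hRHS :=
    integral_pow_mul_sum_mul_eq_sum_weightedPairing hmomR' P (fun k => hh k) (range N) pp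
  simp only [coe_aeval_eq_eval, conj_trivial, RCLike.ofReal_real_eq_id, id, ← sq] at hRHS
  rw [hLHS, hRHS, Finset.mul_sum, Finset.mul_sum]
  push_cast
  refine Finset.sum_congr rfl fun k _ => ?_
  have hk := mul_apply_X_pow_mul_of_rescale hmonic hdeg hα.ne' hp (hB · k) (hB' · k) pp
  simp only [B, B', LinearMap.smul_apply, smul_eq_mul, LinearMap.comp_apply,
    Algebra.linearMap_apply, Complex.coe_algebraMap, Complex.real_smul, Complex.ofReal_pow] at hk
  have h0 : (h k : ℂ) ≠ 0 := by exact_mod_cast (hpos k).ne'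
  have hh0 : (hh k : ℂ) ≠ 0 := by exact_mod_cast (hhpos k).ne'
  rw [← mul_div_assoc, ← mul_div_assoc, div_eq_div_iff h0 hh0]
  linear_combination hk
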